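/- arXiv:2008.03117 — 5 statements merged into one kernel-verified Lean document; each statement's English description precedes it below -/
import Mathlib

section
/- Let π be a set of primes, G a finite group and H ≤ L ≤ G subgroups. If H is N^π-Dnormal in G, then H is N^π-Dnormal in L. -/
/-- A (finite) group is a `π`-group if every prime dividing its order lies in `π`. -/
def IsPiGroup (π : Set ℕ) (G : Type*) [Group G] : Prop :=
  ∀ p : ℕ, p.Prime → p ∣ Nat.card G → p ∈ π

/-- `O^π(G)`: the smallest normal subgroup of `G` whose quotient is a `π`-group
(recall that `N.index = Nat.card (G ⧸ N)`). -/
def piResidual (π : Set ℕ) (G : Type*) [Group G] : Subgroup G :=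
  ⨅ N ∈ {N : Subgroup G | N.Normal ∧ ∀ p : ℕ, p.Prime → p ∣ N.index → p ∈ π}, N

/-- `O_π(G)`: the largest normal `π`-subgroup of `G`. -/
def piCore (π : Set ℕ) (G : Type*) [Group G] : Subgroup G :=
  ⨆ N ∈ {N : Subgroup G | N.Normal ∧ IsPiGroup π N}, N

/-- `O^π(H)` for a subgroup `H ≤ G`, regarded as a subgroup of `G`. -/
def piResidualIn (π : Set ℕ) {G : Type*} [Group G] (H : Subgroup G) : Subgroup G :=
  (piResidual π H).map H.subtype

/-- `H` is `N^π`-Dnormal in `G`: if `|π| ≤ 1` this means `H` is normal in `G`; if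
`|π| ≥ 2` it means that `O^π(H)` is normal in `G` and `O^π(G)` normalizes `H`. -/
def IsDnormal (π : Set ℕ) {G : Type*} [Group G] (H : Subgroup G) : Prop :=
  (π.Subsingleton ∧ H.Normal) ∨
  (¬ π.Subsingleton ∧ (piResidualIn π H).Normal ∧ piResidual π G ≤ Subgroup.normalizer (H : Set G))

/-- `S` is `N^π`-Dsubnormal in `G`: there is a chain `S = S₀ ≤ S₁ ≤ ⋯ ≤ Sₙ = G`
with each `Sᵢ` being `N^π`-Dnormal in `Sᵢ₊₁`. -/
def IsDsubnormal (π : Set ℕ) {G : Type*} [Group G] (S : Subgroup G) : Prop :=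
  ∃ (n : ℕ) (c : Fin (n + 1) → Subgroup G), c 0 = S ∧ c (Fin.last n) = ⊤ ∧
    ∀ i : Fin n, c i.castSucc ≤ c i.succ ∧
      IsDnormal π ((c i.castSucc).subgroupOf (c i.succ))

/-- `H` is subnormal in `G`. -/
def IsSubnormal' {G : Type*} [Group G] (H : Subgroup G) : Prop :=
  ∃ (n : ℕ) (c : Fin (n + 1) → Subgroup G), c 0 = H ∧ c (Fin.last n) = ⊤ ∧
    ∀ i : Fin n, c i.castSucc ≤ c i.succ ∧
      ((c i.castSucc).subgroupOf (c i.succ)).Normal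

/-- The class `N^π`: groups that are the (internal) direct product of a `π`-group and a
nilpotent `π'`-group. -/
def IsNPiGroup (π : Set ℕ) (G : Type*) [Group G] : Prop :=
  ∃ H K : Subgroup G, H.Normal ∧ K.Normal ∧ H ⊓ K = ⊥ ∧ H ⊔ K = ⊤ ∧
    IsPiGroup π H ∧ IsPiGroup πᶜ K ∧ Group.IsNilpotent K

/-- The `N^π`-residual `G^{N^π}`: the smallest normal subgroup of `G` whose quotient
belongs to the class `N^π`. -/
def nPiResidual (π : Set ℕ) (G : Type*) [Group G] : Subgroup G :=
  ⨅ N ∈ {N : Subgroup G | ∃ h : N.Normal, letI := h; IsNPiGroup π (G ⧸ N)}, N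

/-- `G` is `π'`-soluble: it has a normal series each of whose factors is either a
`π`-group or a `p`-group for some prime `p ∉ π`. -/
def IsPiPrimeSoluble (π : Set ℕ) (G : Type*) [Group G] : Prop :=
  ∃ (n : ℕ) (c : Fin (n + 1) → Subgroup G), c 0 = ⊥ ∧ c (Fin.last n) = ⊤ ∧
    ∀ i : Fin n, c i.castSucc ≤ c i.succ ∧
      ((c i.castSucc).subgroupOf (c i.succ)).Normal ∧
      ((∀ p : ℕ, p.Prime → p ∣ ((c i.castSucc).subgroupOf (c i.succ)).index → p ∈ π) ∨
        ∃ p : ℕ, p.Prime ∧ p ∉ π ∧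
          ∃ k : ℕ, ((c i.castSucc).subgroupOf (c i.succ)).index = p ^ k)

/-- An `N^π`-Fitting set of `G`. -/
def IsNPiFittingSet (π : Set ℕ) {G : Type*} [Group G] (F : Set (Subgroup G)) : Prop :=
  F.Nonempty ∧
  (∀ S ∈ F, ∀ T : Subgroup G, T ≤ S → IsDsubnormal π (T.subgroupOf S) → T ∈ F) ∧
  (∀ S ∈ F, ∀ T ∈ F, IsDnormal π (S.subgroupOf (S ⊔ T)) →
    IsDnormal π (T.subgroupOf (S ⊔ T)) → S ⊔ T ∈ F) ∧
  (∀ S ∈ F, ∀ x : G, S.map (MulAut.conj x).toMonoidHom ∈ F)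

/-- The `F`-radical `H_F` of a subgroup `H` of `G`: the join of all subgroups of `H`
belonging to `F` that are normal in `H`. -/
def fittingRadical {G : Type*} [Group G] (F : Set (Subgroup G)) (H : Subgroup G) : Subgroup G :=
  ⨆ S ∈ {S : Subgroup G | S ∈ F ∧ S ≤ H ∧ (S.subgroupOf H).Normal}, S

/-- `M` is an `F`-maximal subgroup of `K`. -/
def IsFMaximalIn {G : Type*} [Group G] (F : Set (Subgroup G)) (M K : Subgroup G) : Prop :=
  M ∈ F ∧ M ≤ K ∧ ∀ S ∈ F, S ≤ K → M ≤ S → S = M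

/-- `V` is an `F`-injector of `G`. -/
def IsInjector {G : Type*} [Group G] (F : Set (Subgroup G)) (V : Subgroup G) : Prop :=
  ∀ K : Subgroup G, IsSubnormal' K → IsFMaximalIn F (V ⊓ K) K

/-- `V` is an `F`-injector of the subgroup `N` of `G`. -/
def IsInjectorIn {G : Type*} [Group G] (F : Set (Subgroup G)) (V N : Subgroup G) : Prop :=
  V ≤ N ∧ ∀ K : Subgroup G, K ≤ N → IsSubnormal' (K.subgroupOf N) → IsFMaximalIn F (V ⊓ K) K

/-- `M` is an `N^π`-maximal subgroup of `X`. -/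
def IsNPiMaximal (π : Set ℕ) {X : Type*} [Group X] (M : Subgroup X) : Prop :=
  IsNPiGroup π M ∧ ∀ M' : Subgroup X, IsNPiGroup π M' → M ≤ M' → M' = M

/-- `U` is an `N^π`-projector of `G`: `UK/K` is `N^π`-maximal in `G/K` for every
normal subgroup `K` of `G`. -/
def IsNPiProjector (π : Set ℕ) {G : Type*} [Group G] (U : Subgroup G) : Prop :=
  ∀ K : Subgroup G, ∀ hK : K.Normal,
    letI := hK
    IsNPiMaximal π ((U ⊔ K).map (QuotientGroup.mk' K))

/-- An `N^π`-Fitting class of (finite) groups: a non-empty isomorphism-closed class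
closed under `N^π`-Dnormal subgroups and under joins of pairs of `N^π`-Dnormal
subgroups. -/
def IsNPiFittingClass (π : Set ℕ) (F : (H : Type) → [_inst : Group H] → Prop) : Prop :=
  (∃ (H : Type) (g : Group H) (_ : Finite H), F H (_inst := g)) ∧
  (∀ (H K : Type) [Group H] [Group K] [Finite H] [Finite K],
    F H → Nonempty (H ≃* K) → F K) ∧
  (∀ (H : Type) [Group H] [Finite H] (N : Subgroup H),
    F H → IsDnormal π N → F ↥N) ∧
  (∀ (H : Type) [Group H] [Finite H] (M N : Subgroup H),
    F ↥M → F ↥N → IsDnormal π M → IsDnormal π N → M ⊔ N = ⊤ → F H)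

/-!
`O^π` is functorial: a homomorphism pulls normal subgroups with `π`-quotient back to such
subgroups, so it maps `O^π(A)` into `O^π(B)`, and an isomorphism maps it onto `O^π(B)`.
Hence `O^π(H)` is the same whether `H` is viewed in `G` or in `L`, and `O^π(L) ≤ O^π(G)`
still normalizes `H`.
-/

section PiResidual

variable {π : Set ℕ} {A B : Type*} [Group A] [Group B]

theorem piResidual_le {N : Subgroup A} (hN : N.Normal)
    (hπN : ∀ p : ℕ, p.Prime → p ∣ N.index → p ∈ π) : piResidual π A ≤ N :=
  iInf₂_le N ⟨hN, hπN⟩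

theorem piResidual_le_comap (f : A →* B) : piResidual π A ≤ (piResidual π B).comap f := by
  intro x hx
  simp only [Subgroup.mem_comap, piResidual, Subgroup.mem_iInf]
  rintro N ⟨hN, hπN⟩
  refine piResidual_le (hN.comap f) (fun p hp hdvd => hπN p hp (hdvd.trans ?_)) hx
  rw [Subgroup.index_comap]
  exact Subgroup.relIndex_dvd_index_of_normal N f.range

theorem map_piResidual_le (f : A →* B) : (piResidual π A).map f ≤ piResidual π B :=
  Subgroup.map_le_iff_le_comap.mpr (piResidual_le_comap f)

theorem map_piResidual_equiv (e : A ≃* B) :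
    (piResidual π A).map e.toMonoidHom = piResidual π B := by
  refine le_antisymm (map_piResidual_le _) ?_
  calc piResidual π B
      = ((piResidual π B).comap e.toMonoidHom).map e.toMonoidHom :=
        (Subgroup.map_comap_eq_self_of_surjective e.surjective _).symm
    _ ≤ (piResidual π A).map e.toMonoidHom := by
        rw [Subgroup.comap_equiv_eq_map_symm']
        exact Subgroup.map_mono (map_piResidual_le _)

theorem map_subtype_piResidualIn_subgroupOf {G : Type*} [Group G] {H L : Subgroup G}
    (hHL : H ≤ L) : (piResidualIn π (H.subgroupOf L)).map L.subtype = piResidualIn π H := by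
  have hsubtype : L.subtype.comp (H.subgroupOf L).subtype =
      H.subtype.comp (Subgroup.subgroupOfEquivOfLe hHL).toMonoidHom := rfl
  rw [piResidualIn, piResidualIn, Subgroup.map_map, hsubtype, ← Subgroup.map_map,
    map_piResidual_equiv]

end PiResidual

theorem dnormal_of_le_general (π : Set ℕ)
    (G : Type*) [Group G] (H L : Subgroup G) (hHL : H ≤ L)
    (h : IsDnormal π H) :
    IsDnormal π (H.subgroupOf L) := by
  rcases h with ⟨hπ, hH⟩ | ⟨hπ, hres, hnorm⟩
  · exact Or.inl ⟨hπ, hH.subgroupOf L⟩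
  · refine Or.inr ⟨hπ, ?_, ?_⟩
    · have hpull : piResidualIn π (H.subgroupOf L) = (piResidualIn π H).subgroupOf L := by
        rw [← map_subtype_piResidualIn_subgroupOf hHL]
        exact (Subgroup.comap_map_eq_self_of_injective L.subtype_injective _).symm
      exact hpull ▸ hres.subgroupOf L
    · rw [← Subgroup.subgroupOf_normalizer_eq hHL]
      exact (piResidual_le_comap L.subtype).trans (Subgroup.comap_mono hnorm)

/-- Lemma 1.4(2): an `N^π`-Dnormal subgroup of `G` is `N^π`-Dnormal in every
intermediate subgroup. -/
theorem dnormal_of_le (π : Set ℕ) (hπ : ∀ p ∈ π, p.Prime)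
    (G : Type*) [Group G] [Finite G] (H L : Subgroup G) (hHL : H ≤ L)
    (h : IsDnormal π H) :
    IsDnormal π (H.subgroupOf L) :=
  dnormal_of_le_general π G H L hHL h
end

section
/- Let π be a set of primes, G a finite group, H a subgroup of G and N a normal subgroup of G. If H is N^π-Dnormal in G, then HN/N is N^π-Dnormal in G/N. -/
/-
For finite `G`, the normal subgroups of `π`-index are closed under intersection, so `O^π(G)` is
the least of them. Preimages and images of such subgroups under a surjection `f : G →* Q` are
again of `π`-index, whence `f` maps `O^π(G)` onto `O^π(Q)`, and likewise `O^π(H)` onto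
`O^π(f H)`. Both clauses of `N^π`-Dnormality therefore pass to surjective images, and `HN/N` is
the image of `H` in `G/N`.
-/

def piIndexNormals (π : Set ℕ) (G : Type*) [Group G] : Set (Subgroup G) :=
  {N | N.Normal ∧ ∀ p : ℕ, p.Prime → p ∣ N.index → p ∈ π}

section PiResidual

variable {π : Set ℕ} {G Q : Type*} [Group G] [Group Q]

variable (π G) in
lemma piResidual_eq_sInf :
    piResidual π G = sInf (piIndexNormals π G) :=
  sInf_eq_iInf.symm

lemma top_mem_piIndexNormals : (⊤ : Subgroup G) ∈ piIndexNormals π G :=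
  ⟨inferInstance, fun p hp hdvd => by
    rw [Subgroup.index_top, Nat.dvd_one] at hdvd
    exact absurd hdvd hp.ne_one⟩

lemma infClosed_piIndexNormals : InfClosed (piIndexNormals π G) := by
  rintro A ⟨hA, hAπ⟩ B ⟨hB, hBπ⟩
  refine ⟨Subgroup.normal_inf_normal A B, fun p hp hdvd => ?_⟩
  -- `[G : A ⊓ B] = [B : A ⊓ B] [G : B]`, and `[B : A ⊓ B]` divides `[G : A]` since `A` is normal
  rw [← Subgroup.relIndex_mul_index inf_le_right, Subgroup.inf_relIndex_right] at hdvd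
  rcases hp.dvd_mul.mp hdvd with h | h
  · exact hAπ p hp (h.trans (Subgroup.relIndex_dvd_index_of_normal A B))
  · exact hBπ p hp h

lemma piResidual_mem_piIndexNormals [Finite G] : piResidual π G ∈ piIndexNormals π G := by
  rw [piResidual_eq_sInf]
  exact infClosed_piIndexNormals.sInf_mem (Set.toFinite _) top_mem_piIndexNormals le_rfl

lemma comap_mem_piIndexNormals {f : G →* Q} (hf : Function.Surjective f) {N : Subgroup Q}
    (hN : N ∈ piIndexNormals π Q) : N.comap f ∈ piIndexNormals π G :=
  ⟨hN.1.comap f, fun p hp hdvd => hN.2 p hp (Subgroup.index_comap_of_surjective N hf ▸ hdvd)⟩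

lemma map_mem_piIndexNormals {f : G →* Q} (hf : Function.Surjective f) {N : Subgroup G}
    (hN : N ∈ piIndexNormals π G) : N.map f ∈ piIndexNormals π Q :=
  ⟨hN.1.map f hf, fun p hp hdvd => hN.2 p hp (hdvd.trans (Subgroup.index_map_dvd N hf))⟩

lemma map_piResidual_of_surjective [Finite G] {f : G →* Q} (hf : Function.Surjective f) :
    (piResidual π G).map f = piResidual π Q := by
  have : Finite Q := Finite.of_surjective f hf
  apply le_antisymm
  · rw [Subgroup.map_le_iff_le_comap, piResidual_eq_sInf]
    exact sInf_le (comap_mem_piIndexNormals hf piResidual_mem_piIndexNormals)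
  · rw [piResidual_eq_sInf π Q]
    exact sInf_le (map_mem_piIndexNormals hf piResidual_mem_piIndexNormals)

lemma piResidualIn_map [Finite G] (f : G →* Q) (H : Subgroup G) :
    piResidualIn π (H.map f) = (piResidualIn π H).map f := by
  have hcomp : (H.map f).subtype.comp (f.subgroupMap H) = f.comp H.subtype := rfl
  rw [piResidualIn, ← map_piResidual_of_surjective (f.subgroupMap_surjective H),
    Subgroup.map_map, hcomp, ← Subgroup.map_map, piResidualIn]

lemma IsDnormal.map [Finite G] {f : G →* Q} (hf : Function.Surjective f) {H : Subgroup G}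
    (h : IsDnormal π H) : IsDnormal π (H.map f) := by
  rcases h with ⟨hπ, hH⟩ | ⟨hπ, hres, hnorm⟩
  · exact .inl ⟨hπ, hH.map f hf⟩
  · refine .inr ⟨hπ, piResidualIn_map f H ▸ hres.map f hf, ?_⟩
    rw [← map_piResidual_of_surjective hf]
    exact (Subgroup.map_mono hnorm).trans (Subgroup.le_normalizer_map f)

end PiResidual

theorem dnormal_quotient_general (π : Set ℕ)
    (G : Type*) [Group G] [Finite G] (H N : Subgroup G) [N.Normal]
    (h : IsDnormal π H) :
    IsDnormal π ((H ⊔ N).map (QuotientGroup.mk' N)) := by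
  rw [Subgroup.map_sup, QuotientGroup.map_mk'_self, sup_bot_eq]
  exact h.map (QuotientGroup.mk'_surjective N)

/-- Lemma 1.4(3): the image `HN/N` of an `N^π`-Dnormal subgroup `H` of `G` is
`N^π`-Dnormal in `G/N`. -/
theorem dnormal_quotient (π : Set ℕ) (hπ : ∀ p ∈ π, p.Prime)
    (G : Type*) [Group G] [Finite G] (H N : Subgroup G) [N.Normal]
    (h : IsDnormal π H) :
    IsDnormal π ((H ⊔ N).map (QuotientGroup.mk' N)) :=
  dnormal_quotient_general π G H N h
end

section
/- Let π be a set of primes and G a finite group belonging to the class N^π. Then every subgroup H of G is N^π-Dsubnormal in G. -/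
/-! Write `G = A × B` with `A` a `π`-group and `B` a nilpotent `π'`-group. The preimages in `B`
of the upper central series of `G/A ≅ B` form a central series of `G` ending at `B`, so `H` is
subnormal in `HB`; and normal subgroups are `N^π`-Dnormal because `O^π` is characteristic.
If `|π| ≥ 2`, then `HB` is `N^π`-Dnormal in `G`, since `O^π(HB) = B = O^π(G)`. If `|π| ≤ 1`,
then `A` is a `p`-group, and the same argument with `A` and `B` exchanged shows that `HB` is
subnormal in `HBA = G`. -/

open Subgroup

section PiGroup

variable {π : Set ℕ} {G : Type*} [Group G]

theorem IsPiGroup.of_card_dvd {K : Type*} [Group K] (hG : IsPiGroup π G)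
    (h : Nat.card K ∣ Nat.card G) : IsPiGroup π K :=
  fun p hp hpK => hG p hp (hpK.trans h)

theorem IsPiGroup.card_eq_one (h : IsPiGroup π G) (h' : IsPiGroup πᶜ G) : Nat.card G = 1 := by
  by_contra hne
  obtain ⟨p, hp, hpG⟩ := Nat.exists_prime_and_dvd hne
  exact h' p hp hpG (h p hp hpG)

theorem IsPiGroup.isNilpotent [Finite G] (hπ : π.Subsingleton) (h : IsPiGroup π G) :
    Group.IsNilpotent G := by
  by_cases hG : Nat.card G = 1
  · have : Subsingleton G := (Nat.card_eq_one_iff_unique.mp hG).1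
    infer_instance
  obtain ⟨p, hp, hpG⟩ := Nat.exists_prime_and_dvd hG
  have : Fact p.Prime := ⟨hp⟩
  exact (IsPGroup.of_card (Nat.eq_prime_pow_of_unique_prime_dvd Nat.card_pos.ne'
    fun hq hqG => hπ (h _ hq hqG) (h p hp hpG))).isNilpotent

end PiGroup

section PiResidual

variable {π : Set ℕ} {K : Type*} [Group K]

theorem piResidual_le_s5 (N : Subgroup K) [N.Normal] (h : IsPiGroup π (K ⧸ N)) :
    piResidual π K ≤ N :=
  iInf₂_le N ⟨inferInstance, h⟩

theorem le_piResidual {P : Subgroup K} (hP : IsPiGroup πᶜ P) : P ≤ piResidual π K := by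
  refine le_iInf₂ fun N ⟨hN, hKN⟩ => ?_
  have : N.Normal := hN
  have hPN : P.map (QuotientGroup.mk' N) = ⊥ := card_eq_one.mp <| IsPiGroup.card_eq_one
    ((show IsPiGroup π (K ⧸ N) from hKN).of_card_dvd (card_subgroup_dvd_card _))
    (hP.of_card_dvd (card_dvd_of_surjective _ (MonoidHom.subgroupMap_surjective _ P)))
  rwa [Subgroup.map_eq_bot_iff, QuotientGroup.ker_mk'] at hPN

theorem piResidual_eq (N : Subgroup K) [N.Normal] (hN : IsPiGroup πᶜ N)
    (hKN : IsPiGroup π (K ⧸ N)) : piResidual π K = N :=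
  le_antisymm (piResidual_le_s5 N hKN) (le_piResidual hN)

instance piResidual_characteristic : (piResidual π K).Characteristic := by
  refine characteristic_iff_le_comap.mpr fun ϕ => ?_
  rw [piResidual, comap_iInf]
  refine le_iInf fun N => ?_
  rw [comap_iInf]
  refine le_iInf fun ⟨hN, hKN⟩ => iInf₂_le _ ⟨hN.comap _, ?_⟩
  rwa [index_comap_of_surjective _ ϕ.surjective]

theorem piResidualIn_eq {Y N : Subgroup K} [N.Normal] (hNY : N ≤ Y) (hN : IsPiGroup πᶜ N)
    (hKN : IsPiGroup π (K ⧸ N)) : piResidualIn π Y = N := by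
  have hY : piResidual π Y = N.subgroupOf Y :=
    piResidual_eq _ (hN.of_card_dvd (Nat.card_congr (subgroupOfEquivOfLe hNY).toEquiv).dvd)
      (hKN.of_card_dvd (relIndex_dvd_index_of_normal N Y))
  rw [piResidualIn, hY, subgroupOf_map_subtype, inf_eq_left.mpr hNY]

end PiResidual

section Dsubnormal

variable {π : Set ℕ} {G : Type*} [Group G]

theorem isDnormal_of_normal {K : Type*} [Group K] (Y : Subgroup K) [Y.Normal] :
    IsDnormal π Y := by
  by_cases hπ : π.Subsingleton
  · exact Or.inl ⟨hπ, inferInstance⟩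
  · exact Or.inr ⟨hπ, ConjAct.normal_of_characteristic_of_normal,
      by rw [normalizer_eq_top]; exact le_top⟩

theorem isDnormal_of_normal_le {K : Type*} [Group K] (hπ : ¬ π.Subsingleton) {Y N : Subgroup K}
    [N.Normal] (hNY : N ≤ Y) (hN : IsPiGroup πᶜ N) (hKN : IsPiGroup π (K ⧸ N)) :
    IsDnormal π Y :=
  Or.inr ⟨hπ, piResidualIn_eq hNY hN hKN ▸ inferInstance,
    (piResidual_le_s5 N hKN).trans (hNY.trans le_normalizer)⟩

theorem isDsubnormal_top : IsDsubnormal π (⊤ : Subgroup G) :=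
  ⟨0, fun _ => ⊤, rfl, rfl, fun i => i.elim0⟩

theorem IsDsubnormal.of_isDnormal_subgroupOf {H K : Subgroup G} (hK : IsDsubnormal π K)
    (hHK : H ≤ K) (hH : IsDnormal π (H.subgroupOf K)) : IsDsubnormal π H := by
  obtain ⟨n, c, hc0, hcn, hc⟩ := hK
  refine ⟨n + 1, Fin.cons H c, rfl, by rw [← Fin.succ_last, Fin.cons_succ, hcn],
    Fin.cases ?_ fun i => ?_⟩
  · rw [Fin.castSucc_zero, Fin.cons_zero, Fin.cons_succ, hc0]
    exact ⟨hHK, hH⟩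
  · rw [← Fin.succ_castSucc, Fin.cons_succ, Fin.cons_succ]
    exact hc i

theorem isDsubnormal_of_normal_le (hπ : ¬ π.Subsingleton) {Y B : Subgroup G} [B.Normal]
    (hBY : B ≤ Y) (hB : IsPiGroup πᶜ B) (hGB : IsPiGroup π (G ⧸ B)) : IsDsubnormal π Y :=
  isDsubnormal_top.of_isDnormal_subgroupOf le_top <|
    isDnormal_of_normal_le hπ (N := B.subgroupOf ⊤) (comap_mono hBY)
      (hB.of_card_dvd (Nat.card_congr (subgroupOfEquivOfLe le_top).toEquiv).dvd)
      (hGB.of_card_dvd (relIndex_top_right B).dvd)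

theorem sup_subgroupOf_sup_normal {Z : ℕ → Subgroup G}
    (hZ : Subgroup.IsAscendingCentralSeries Z) (hmono : Monotone Z) (H : Subgroup G) (n : ℕ) :
    ((H ⊔ Z n).subgroupOf (H ⊔ Z (n + 1))).Normal := by
  rw [normal_subgroupOf_iff_le_normalizer (sup_le_sup_left (hmono n.le_succ) H)]
  refine sup_le (le_sup_left.trans le_normalizer) ?_
  rw [le_normalizer_iff_commutator_le_right]
  exact (commutator_le.mpr fun x hx g _ => hZ.2 x n hx g).trans le_sup_right

theorem IsDsubnormal.of_sup_of_isAscendingCentralSeries {Z : ℕ → Subgroup G}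
    (hZ : Subgroup.IsAscendingCentralSeries Z) (hmono : Monotone Z) {H : Subgroup G} {n : ℕ}
    (h : IsDsubnormal π (H ⊔ Z n)) : IsDsubnormal π H := by
  induction n with
  | zero => rwa [hZ.1, sup_bot_eq] at h
  | succ n ih =>
    have := sup_subgroupOf_sup_normal hZ hmono H n
    exact ih (h.of_isDnormal_subgroupOf (sup_le_sup_left (hmono n.le_succ) H)
      (isDnormal_of_normal _))

end Dsubnormal

section DirectProduct

variable {π : Set ℕ} {G : Type*} [Group G]

theorem isComplement'_of_inf_eq_bot_of_sup_eq_top {A B : Subgroup G} [B.Normal]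
    (hAB : A ⊓ B = ⊥) (hsup : A ⊔ B = ⊤) : A.IsComplement' B :=
  isComplement'_of_disjoint_and_mul_eq_univ (disjoint_iff.mpr hAB)
    (by rw [← mul_normal, hsup]; rfl)

theorem isAscendingCentralSeries_comap_upperCentralSeries_inf (A B : Subgroup G) [A.Normal]
    [B.Normal] (hAB : A ⊓ B = ⊥) :
    Subgroup.IsAscendingCentralSeries
      fun n => (Subgroup.upperCentralSeries (G ⧸ A) n).comap (QuotientGroup.mk' A) ⊓ B := by
  refine ⟨by simpa [Subgroup.upperCentralSeries_zero] using hAB,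
    fun x n hx g => mem_inf.mpr ⟨?_, ?_⟩⟩
  · rw [mem_comap, map_commutatorElement]
    exact Subgroup.mem_upperCentralSeries_succ_iff.mp hx.1 _
  · exact commutator_le_left B ⊤ (commutator_mem_commutator hx.2 (mem_top g))

theorem IsDsubnormal.of_sup_of_inf_eq_bot {A B H : Subgroup G} [A.Normal] [B.Normal]
    [Group.IsNilpotent (G ⧸ A)] (hAB : A ⊓ B = ⊥) (h : IsDsubnormal π (H ⊔ B)) :
    IsDsubnormal π H := by
  refine IsDsubnormal.of_sup_of_isAscendingCentralSeries
    (isAscendingCentralSeries_comap_upperCentralSeries_inf A B hAB)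
    (fun m n hmn => inf_le_inf_right B (comap_mono (Subgroup.upperCentralSeries_mono _ hmn)))
    (n := Group.nilpotencyClass (G ⧸ A)) ?_
  rwa [Subgroup.upperCentralSeries_nilpotencyClass, comap_top, top_inf_eq]

end DirectProduct

theorem dsubnormal_of_nPiGroup_general (π : Set ℕ)
    (G : Type*) [Group G] [Finite G] (hG : IsNPiGroup π G) (H : Subgroup G) :
    IsDsubnormal π H := by
  obtain ⟨A, B, hA, hB, hAB, hsup, hAπ, hBπ, hBnil⟩ := hG
  have hc := isComplement'_of_inf_eq_bot_of_sup_eq_top hAB hsup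
  have : Group.IsNilpotent (G ⧸ A) := Group.nilpotent_of_mulEquiv hc.symm.QuotientMulEquiv.symm
  refine IsDsubnormal.of_sup_of_inf_eq_bot hAB ?_
  by_cases hπ : π.Subsingleton
  · have := hAπ.isNilpotent hπ
    have : Group.IsNilpotent (G ⧸ B) := Group.nilpotent_of_mulEquiv hc.QuotientMulEquiv.symm
    refine IsDsubnormal.of_sup_of_inf_eq_bot (inf_comm A B ▸ hAB) ?_
    rw [sup_assoc, sup_comm B, hsup, sup_top_eq]
    exact isDsubnormal_top
  · exact isDsubnormal_of_normal_le hπ le_sup_right hBπ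
      (hAπ.of_card_dvd (Nat.card_congr hc.QuotientMulEquiv.toEquiv).dvd)

/-- Lemma 1.4(6): in a group of the class `N^π`, every subgroup is `N^π`-Dsubnormal. -/
theorem dsubnormal_of_nPiGroup (π : Set ℕ) (hπ : ∀ p ∈ π, p.Prime)
    (G : Type*) [Group G] [Finite G] (hG : IsNPiGroup π G) (H : Subgroup G) :
    IsDsubnormal π H :=
  dsubnormal_of_nPiGroup_general π G hG H
end

section
/- Let π be a set of primes and H an N^π-Dnormal subgroup of a finite group G. Let C = Core_G(H) be the largest normal subgroup of G contained in H, and let ⟨H^G⟩ be the normal closure of H in G. Then ⟨H^G⟩/C is a π-group. -/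
/-!
Dividing by `O^π(H)`, which is normal in `G` and contained in the core, reduces the theorem to:
a π-subgroup `H` normalized by a normal subgroup `R` of π-index has a π-group as normal closure.
The conjugates of `H ⊓ R` are π-subgroups normalized by `R`, so they generate a normal
π-subgroup `O`. Modulo `O`, `H` meets `R` trivially, so `⁅H, R⁆ = 1` and `R` centralizes
`N = ⟨H^G⟩`. Then the centre of `N` has π-index and `N` is generated by π-elements, and the
transfer `x ↦ x ^ [N : Z(N)]` into the centre shows that every element of `N` is a π-element.
-/

open Subgroup

variable {π : Set ℕ}

-- `IsPiGroup π G` is definitionally `IsPiNumber π (Nat.card G)`; the proofs switch freely.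
def IsPiNumber (π : Set ℕ) (n : ℕ) : Prop := ∀ p : ℕ, p.Prime → p ∣ n → p ∈ π

theorem isPiNumber_one : IsPiNumber π 1 :=
  fun _ hp hp1 => absurd (Nat.dvd_one.1 hp1) hp.ne_one

theorem IsPiNumber.of_dvd {m n : ℕ} (hn : IsPiNumber π n) (hmn : m ∣ n) : IsPiNumber π m :=
  fun p hp hpm => hn p hp (hpm.trans hmn)

theorem IsPiNumber.mul {m n : ℕ} (hm : IsPiNumber π m) (hn : IsPiNumber π n) :
    IsPiNumber π (m * n) :=
  fun p hp hpmn => (hp.dvd_mul.1 hpmn).elim (hm p hp) (hn p hp)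

section Group

variable {G G' : Type*} [Group G] [Group G']

theorem IsPiGroup.of_surjective (hG : IsPiGroup π G) {f : G →* G'} (hf : Function.Surjective f) :
    IsPiGroup π G' :=
  IsPiNumber.of_dvd hG (card_dvd_of_surjective f hf)

theorem IsPiGroup.of_mulEquiv (hG : IsPiGroup π G) (e : G ≃* G') : IsPiGroup π G' :=
  hG.of_surjective (f := e.toMonoidHom) e.surjective

theorem IsPiGroup.of_le {H K : Subgroup G} (hK : IsPiGroup π K) (hHK : H ≤ K) :
    IsPiGroup π H :=
  IsPiNumber.of_dvd hK (card_dvd_of_le hHK)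

theorem IsPiGroup.subgroupOf {H : Subgroup G} (hH : IsPiGroup π H) (K : Subgroup G) :
    IsPiGroup π (H.subgroupOf K) := by
  have hmap : IsPiGroup π ((H.subgroupOf K).map K.subtype) := by
    rw [subgroupOf_map_subtype]
    exact hH.of_le inf_le_left
  exact hmap.of_mulEquiv ((H.subgroupOf K).equivMapOfInjective _ K.subtype_injective).symm

theorem IsPiGroup.of_normal_of_quotient {N : Subgroup G} [N.Normal] (hN : IsPiGroup π N)
    (hQ : IsPiGroup π (G ⧸ N)) : IsPiGroup π G :=
  (card_eq_card_quotient_mul_card_subgroup N ▸ IsPiNumber.mul hQ hN : IsPiNumber π (Nat.card G))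

theorem IsPiGroup.isPiNumber_orderOf (hG : IsPiGroup π G) (g : G) : IsPiNumber π (orderOf g) :=
  IsPiNumber.of_dvd hG (orderOf_dvd_natCard g)

theorem isPiNumber_index_inf {N M : Subgroup G} [N.Normal] (hN : IsPiNumber π N.index)
    (hM : IsPiNumber π M.index) : IsPiNumber π (N ⊓ M).index := by
  rw [← relIndex_mul_index inf_le_right, inf_relIndex_right]
  exact (hN.of_dvd (relIndex_dvd_index_of_normal N M)).mul hM

theorem index_subgroupOf_ker (f : G →* G') (N : Subgroup G) :
    (f.ker.subgroupOf N).index = Nat.card (N.map f) := by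
  rw [← ker_subgroupMap, index_ker,
    MonoidHom.range_eq_top_of_surjective _ (f.subgroupMap_surjective N), card_top]

theorem IsPiGroup.sup {A B : Subgroup G} (hA : IsPiGroup π A) (hB : IsPiGroup π B)
    (hAB : A ≤ normalizer (B : Set G)) : IsPiGroup π ↥(A ⊔ B) := by
  have := normal_subgroupOf_of_le_normalizer hAB
  have := normal_subgroupOf_sup_of_le_normalizer hAB
  have hB' : IsPiGroup π (B.subgroupOf (A ⊔ B)) := hB.subgroupOf _
  refine hB'.of_normal_of_quotient ?_
  exact (hA.of_surjective (QuotientGroup.mk'_surjective _)).of_mulEquiv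
    (QuotientGroup.quotientInfEquivProdNormalizerQuotient A B hAB)

theorem IsPiGroup.isPiNumber_orderOf_of_mem_conjugatesOfSet {H : Subgroup G}
    (hH : IsPiGroup π H) {c : G} (hc : c ∈ Group.conjugatesOfSet (H : Set G)) :
    IsPiNumber π (orderOf c) := by
  obtain ⟨a, ha, u, hu⟩ := Group.mem_conjugatesOfSet_iff.1 hc
  rw [← hu.orderOf_eq]
  simpa using hH.isPiNumber_orderOf ⟨a, ha⟩

theorem le_centralizer_of_le_normalizer_of_inf_eq_bot {H R : Subgroup G} [R.Normal]
    (hRH : R ≤ normalizer (H : Set G)) (hHR : H ⊓ R = ⊥) : H ≤ centralizer R := by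
  rw [← commutator_eq_bot_iff_le_centralizer, eq_bot_iff, ← hHR, commutator_le]
  intro h hh r hr
  have hconj : r * h⁻¹ * r⁻¹ ∈ H := (mem_normalizer_iff.1 (hRH hr) h⁻¹).1 (inv_mem hh)
  rw [commutatorElement_def, mem_inf]
  exact ⟨by simpa only [mul_assoc] using mul_mem hh hconj,
    mul_mem (Normal.conj_mem inferInstance r hr h) (inv_mem hr)⟩

end Group

def piTorsion (π : Set ℕ) (A : Type*) [Group A] [IsMulCommutative A] : Subgroup A where
  carrier := {a | IsPiNumber π (orderOf a)}
  one_mem' := by simpa using isPiNumber_one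
  mul_mem' {a b} ha hb :=
    (IsPiNumber.mul ha hb).of_dvd (Commute.orderOf_mul_dvd_mul_orderOf (mul_comm' a b))
  inv_mem' {a} ha := by simpa using ha

section Finite

variable {G : Type*} [Group G] [Finite G]

theorem isPiGroup_of_forall_isPiNumber_orderOf
    (h : ∀ g : G, IsPiNumber π (orderOf g)) : IsPiGroup π G := by
  intro p hp hpG
  have := Fact.mk hp
  obtain ⟨g, hg⟩ := exists_prime_orderOf_dvd_card' p hpG
  exact h g p hp (hg ▸ dvd_rfl)

theorem piResidual_normal_and_isPiNumber_index :
    (piResidual π G).Normal ∧ IsPiNumber π (piResidual π G).index := by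
  refine InfClosed.biInf_mem (s := {N : Subgroup G | N.Normal ∧ IsPiNumber π N.index}) (f := id)
    ?_ (Set.toFinite _) ⟨inferInstance, ?_⟩ fun _ h => h
  · rintro N ⟨hN, hNπ⟩ M ⟨hM, hMπ⟩
    exact ⟨inferInstance, isPiNumber_index_inf hNπ hMπ⟩
  · rw [index_top]
    exact isPiNumber_one

theorem IsPiGroup.normalClosure_of_le_of_le_normalizer {D R : Subgroup G} [R.Normal]
    (hD : IsPiGroup π D) (hDR : D ≤ R) (hRD : R ≤ normalizer (D : Set G)) :
    IsPiGroup π (normalClosure (D : Set G)) := by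
  let S : Set (Subgroup G) := {A | A ≤ R ∧ R ≤ normalizer (A : Set G) ∧ IsPiGroup π A}
  have hS : SupClosed S := by
    rintro A ⟨hAR, hRA, hA⟩ B ⟨hBR, hRB, hB⟩
    exact ⟨sup_le hAR hBR, (le_inf hRA hRB).trans (normalizer_inf_normalizer_le_normalizer_sup A B),
      hA.sup hB (hAR.trans hRB)⟩
  have hbot : (⊥ : Subgroup G) ∈ S := by
    refine ⟨bot_le, le_normalizer_of_normal, ?_⟩
    show IsPiNumber π (Nat.card (⊥ : Subgroup G))
    rw [card_bot]
    exact isPiNumber_one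
  have hconj : ∀ g : G, D.map (MulAut.conj g) ∈ S := by
    intro g
    refine ⟨(map_mono hDR).trans (Normal.map_conj_eq R g).le, ?_,
      hD.of_mulEquiv (D.equivMapOfInjective _ (MulAut.conj g).injective)⟩
    calc R = R.map (MulAut.conj g) := (Normal.map_conj_eq R g).symm
      _ ≤ (normalizer (D : Set G)).map (MulAut.conj g) := map_mono hRD
      _ ≤ _ := le_normalizer_map _
  have hM : (⨆ g : G, D.map (MulAut.conj g)) ∈ S := hS.iSup_mem hbot hconj
  refine hM.2.2.of_le ((closure_le _).2 ?_)
  rintro _ hx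
  obtain ⟨d, hd, hconj⟩ := Group.mem_conjugatesOfSet_iff.1 hx
  obtain ⟨g, rfl⟩ := isConj_iff.1 hconj
  exact mem_iSup_of_mem g ⟨d, hd, rfl⟩

theorem isPiGroup_closure_of_isPiNumber_index_center {S : Set G}
    (hS : ∀ s ∈ S, IsPiNumber π (orderOf s))
    (hZ : IsPiNumber π (center (closure S)).index) : IsPiGroup π (closure S) := by
  set N := closure S
  let U : Subgroup N := (piTorsion π (center N)).comap (MonoidHom.transferCenterPow N)
  have hU : ∀ x : N, x ∈ U ↔ IsPiNumber π (orderOf (x ^ (center N).index)) := fun x => by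
    rw [← MonoidHom.transferCenterPow_apply, orderOf_submonoid]; rfl
  have hNU : N ≤ U.map N.subtype := by
    refine (closure_le _).2 fun s hs => ⟨⟨s, subset_closure hs⟩, (hU _).2 ?_, rfl⟩
    rw [← orderOf_submonoid]
    exact (hS s hs).of_dvd (orderOf_pow_dvd _)
  refine isPiGroup_of_forall_isPiNumber_orderOf fun x => ?_
  obtain ⟨y, hy, hyx⟩ := hNU x.2
  obtain rfl : y = x := Subtype.ext hyx
  refine (hZ.mul ((hU y).1 hy)).of_dvd (orderOf_dvd_of_pow_eq_one ?_)
  rw [pow_mul, pow_orderOf_eq_one]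

theorem isPiGroup_normalClosure_of_inf_eq_bot {H R : Subgroup G} [R.Normal]
    (hH : IsPiGroup π H) (hR : IsPiNumber π R.index) (hRH : R ≤ normalizer (H : Set G))
    (hHR : H ⊓ R = ⊥) : IsPiGroup π (normalClosure (H : Set G)) := by
  set N := normalClosure (H : Set G)
  have hN : N ≤ centralizer R :=
    normalClosure_le_normal (le_centralizer_of_le_normalizer_of_inf_eq_bot hRH hHR)
  have hZ : R.subgroupOf N ≤ center N := fun x hx =>
    mem_center_iff.2 fun y => Subtype.ext (hN y.2 x hx).symm
  exact isPiGroup_closure_of_isPiNumber_index_center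
    (fun _ hc => hH.isPiNumber_orderOf_of_mem_conjugatesOfSet hc)
    (hR.of_dvd ((index_dvd_of_le hZ).trans (relIndex_dvd_index_of_normal R N)))

theorem isPiGroup_normalClosure {H R : Subgroup G} [R.Normal]
    (hH : IsPiGroup π H) (hR : IsPiNumber π R.index) (hRH : R ≤ normalizer (H : Set G)) :
    IsPiGroup π (normalClosure (H : Set G)) := by
  set N := normalClosure (H : Set G)
  set O := normalClosure ((H ⊓ R : Subgroup G) : Set G)
  have hO : IsPiGroup π O := (hH.of_le inf_le_left).normalClosure_of_le_of_le_normalizer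
    inf_le_right ((le_inf hRH le_normalizer).trans inf_normalizer_le_normalizer_inf)
  have hOR : O ≤ R := normalClosure_le_normal inf_le_right
  set f := QuotientGroup.mk' O
  have hf : Function.Surjective f := QuotientGroup.mk'_surjective O
  have := Normal.map ‹R.Normal› f hf
  have hHRbar : H.map f ⊓ R.map f = ⊥ := by
    rw [eq_bot_iff]
    rintro _ ⟨⟨h, hh, rfl⟩, r, hr, hrh⟩
    have hhR : h ∈ R := by simpa using mul_mem hr (hOR (QuotientGroup.eq.1 hrh))
    exact mem_bot.2 ((QuotientGroup.eq_one_iff h).2 (subset_normalClosure ⟨hh, hhR⟩))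
  have hNbar : IsPiGroup π (normalClosure (H.map f : Set (G ⧸ O))) :=
    isPiGroup_normalClosure_of_inf_eq_bot (hH.of_surjective (f.subgroupMap_surjective H))
      (hR.of_dvd (index_map_dvd R hf)) ((map_mono hRH).trans (le_normalizer_map f)) hHRbar
  show IsPiNumber π (Nat.card N)
  rw [← card_mul_index (O.subgroupOf N)]
  refine IsPiNumber.mul (hO.subgroupOf N) ?_
  rwa [← QuotientGroup.ker_mk' O, index_subgroupOf_ker, map_normalClosure _ _ hf]

end Finite

theorem normalClosure_over_core_pi_general (π : Set ℕ)
    (G : Type*) [Group G] [Finite G] (H : Subgroup G)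
    (h : IsDnormal π H) :
    ∀ p : ℕ, p.Prime →
      p ∣ (H.normalCore.subgroupOf (Subgroup.normalClosure (H : Set G))).index → p ∈ π := by
  rcases h with ⟨-, hH⟩ | ⟨-, hK, hRH⟩
  · rw [normalClosure_eq_self, normalCore_eq_self, subgroupOf_self, index_top]
    exact isPiNumber_one
  · set K := piResidualIn π H
    set f := QuotientGroup.mk' K
    have hf : Function.Surjective f := QuotientGroup.mk'_surjective K
    obtain ⟨hRn, hRπ⟩ := piResidual_normal_and_isPiNumber_index (π := π) (G := G)
    have := Normal.map hRn f hf
    have hHbar : IsPiGroup π (H.map f) := by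
      show IsPiNumber π _
      have hKH : K.subgroupOf H = piResidual π H :=
        comap_map_eq_self_of_injective H.subtype_injective _
      rw [← index_subgroupOf_ker, QuotientGroup.ker_mk', hKH]
      exact (piResidual_normal_and_isPiNumber_index (π := π) (G := H)).2
    have hNbar := isPiGroup_normalClosure hHbar (hRπ.of_dvd (index_map_dvd _ hf))
      ((map_mono hRH).trans (le_normalizer_map f))
    have hKC : K ≤ H.normalCore := normal_le_normalCore.2 (map_subtype_le _)
    refine IsPiNumber.of_dvd ?_ (index_dvd_of_le (subgroupOf_mono _ hKC))
    rw [← QuotientGroup.ker_mk' K, index_subgroupOf_ker, map_normalClosure _ _ hf]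
    exact hNbar

/-- Lemma 1.5(2): if `H` is `N^π`-Dnormal in `G`, `C = Core_G(H)` and `⟨H^G⟩` is the
normal closure of `H` in `G`, then `⟨H^G⟩/C` is a `π`-group (every prime dividing
the index of `C` in `⟨H^G⟩` lies in `π`). -/
theorem normalClosure_over_core_pi (π : Set ℕ) (hπ : ∀ p ∈ π, p.Prime)
    (G : Type*) [Group G] [Finite G] (H : Subgroup G)
    (h : IsDnormal π H) :
    ∀ p : ℕ, p.Prime →
      p ∣ (H.normalCore.subgroupOf (Subgroup.normalClosure (H : Set G))).index → p ∈ π :=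
  normalClosure_over_core_pi_general π G H h
end

section
/- Let π be a set of primes, H an N^π-Dnormal subgroup of a finite group G, and V any subgroup of G. Then H ∩ V is N^π-Dnormal in V. -/
/-!
In a finite group `K`, `O^π(K)` is generated by the `π'`-elements of `K`. Hence `O^π(H ∩ V)`
is generated by `π'`-elements of `H ∩ V`; they lie in `O^π(H)`, which is normal in `G`, so their
`V`-conjugates are again `π'`-elements of `H ∩ V`. Likewise `O^π(V) ≤ O^π(G)`, and `O^π(G)`
normalizes `H` while `V` normalizes `V`, so `O^π(V)` normalizes `H ∩ V`.
-/

open Subgroup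

section PiPrimeElement

def IsPiPrimeElement (π : Set ℕ) {M : Type*} [Monoid M] (x : M) : Prop :=
  ∀ q : ℕ, q.Prime → q ∣ orderOf x → q ∉ π

lemma IsPiPrimeElement.of_orderOf_dvd {π : Set ℕ} {M N : Type*} [Monoid M] [Monoid N]
    {x : M} {y : N} (hx : IsPiPrimeElement π x) (h : orderOf y ∣ orderOf x) :
    IsPiPrimeElement π y :=
  fun q hq hqy => hx q hq (hqy.trans h)

lemma IsPiPrimeElement.eq_one {π : Set ℕ} {M : Type*} [Monoid M] {x : M}
    (hx : IsPiPrimeElement π x) (h : ∀ q : ℕ, q.Prime → q ∣ orderOf x → q ∈ π) : x = 1 :=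
  orderOf_eq_one_iff.1 <| Nat.eq_one_iff_not_exists_prime_dvd.2 fun q hq hqx =>
    hx q hq hqx (h q hq hqx)

variable {π : Set ℕ} {K : Type*} [Group K]

lemma isPiPrimeElement_conj_iff {g x : K} :
    IsPiPrimeElement π (g * x * g⁻¹) ↔ IsPiPrimeElement π x := by
  rw [IsPiPrimeElement, IsPiPrimeElement, (SemiconjBy.conj_mk g x).orderOf_eq]

lemma Subgroup.isPiPrimeElement_coe_iff {W : Subgroup K} {x : W} :
    IsPiPrimeElement π (x : K) ↔ IsPiPrimeElement π x := by
  rw [IsPiPrimeElement, IsPiPrimeElement, Subgroup.orderOf_coe]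

lemma isPiPrimeElement_pow_ordCompl {p : ℕ} (hp : p.Prime) (hpπ : p ∉ π) (g : K) :
    IsPiPrimeElement π (g ^ ordCompl[p] (orderOf g)) := by
  have hdvd : orderOf (g ^ ordCompl[p] (orderOf g)) ∣ p ^ (orderOf g).factorization p := by
    refine orderOf_dvd_of_pow_eq_one ?_
    rw [← pow_mul, mul_comm, Nat.ordProj_mul_ordCompl_eq_self, pow_orderOf_eq_one]
  intro q hq hqg
  rwa [(Nat.prime_dvd_prime_iff_eq hq hp).1 (hq.dvd_of_dvd_pow (hqg.trans hdvd))]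

lemma mem_piResidual_of_isPiPrimeElement {x : K} (hx : IsPiPrimeElement π x) :
    x ∈ piResidual π K := by
  refine mem_iInf.2 fun N => mem_iInf.2 fun ⟨hN, hNπ⟩ => ?_
  have := hN
  rw [← QuotientGroup.eq_one_iff]
  refine (hx.of_orderOf_dvd (orderOf_map_dvd (QuotientGroup.mk' N) x)).eq_one
    fun q hq hqx => hNπ q hq ?_
  rw [index_eq_card]
  exact hqx.trans (orderOf_dvd_natCard _)

lemma closure_normal_of_conj_mem {s : Set K} (h : ∀ g : K, ∀ x ∈ s, g * x * g⁻¹ ∈ s) :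
    (closure s).Normal := by
  have hs : Group.conjugatesOfSet s ⊆ s := fun x hx => by
    obtain ⟨a, ha, hc⟩ := Group.mem_conjugatesOfSet_iff.1 hx
    obtain ⟨c, rfl⟩ := isConj_iff.1 hc
    exact h c a ha
  rw [le_antisymm closure_le_normalClosure (closure_mono hs)]
  exact normalClosure_normal

lemma piResidual_eq_closure [Finite K] :
    piResidual π K = closure {x : K | IsPiPrimeElement π x} := by
  set S := closure {x : K | IsPiPrimeElement π x}
  have hS : S.Normal := closure_normal_of_conj_mem fun g x hx => isPiPrimeElement_conj_iff.2 hx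
  refine le_antisymm (iInf₂_le S ⟨hS, fun p hp hpS => ?_⟩)
    ((closure_le _).2 fun x hx => mem_piResidual_of_isPiPrimeElement hx)
  -- By Cauchy, a prime `p ∉ π` dividing `|K / S|` is the order of some `g S`. With `m` the
  -- `p'`-part of `orderOf g`, `g ^ m` is a `p`-element, hence a `π'`-element in `S`,
  -- so `p ∣ m`.
  by_contra hpπ
  have := Fact.mk hp
  rw [index_eq_card] at hpS
  obtain ⟨g', hg'⟩ := exists_prime_orderOf_dvd_card' p hpS
  obtain ⟨g, rfl⟩ := QuotientGroup.mk_surjective g'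
  have hone : (g : K ⧸ S) ^ ordCompl[p] (orderOf g) = 1 := by
    rw [← QuotientGroup.mk_pow, QuotientGroup.eq_one_iff]
    exact subset_closure (isPiPrimeElement_pow_ordCompl hp hpπ g)
  have hdvd := orderOf_dvd_of_pow_eq_one hone
  rw [hg'] at hdvd
  exact Nat.not_dvd_ordCompl hp (orderOf_pos g).ne' hdvd

lemma piResidualIn_eq_closure [Finite K] (W : Subgroup K) :
    piResidualIn π W = closure {x : K | x ∈ W ∧ IsPiPrimeElement π x} := by
  rw [piResidualIn, piResidual_eq_closure, MonoidHom.map_closure]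
  congr 1
  ext x
  constructor
  · rintro ⟨y, hy, rfl⟩
    exact ⟨y.2, isPiPrimeElement_coe_iff.2 hy⟩
  · rintro ⟨hxW, hx⟩
    exact ⟨⟨x, hxW⟩, isPiPrimeElement_coe_iff.1 hx, rfl⟩

lemma piResidual_le_comap_s8 [Finite K] {L : Type*} [Group L] (f : K →* L) :
    piResidual π K ≤ (piResidual π L).comap f := by
  rw [piResidual_eq_closure, closure_le]
  exact fun x hx => mem_piResidual_of_isPiPrimeElement (hx.of_orderOf_dvd (orderOf_map_dvd f x))

end PiPrimeElement

section Dnormal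

variable {π : Set ℕ} {G : Type*} [Group G] [Finite G] {H : Subgroup G}

lemma normal_piResidualIn_subgroupOf (hH : (piResidualIn π H).Normal) (V : Subgroup G) :
    (piResidualIn π (H.subgroupOf V)).Normal := by
  rw [piResidualIn_eq_closure]
  refine closure_normal_of_conj_mem fun v x ⟨hxH, hx⟩ => ⟨?_, isPiPrimeElement_conj_iff.2 hx⟩
  have hxR : (x : G) ∈ piResidualIn π H := by
    rw [piResidualIn_eq_closure]
    exact subset_closure ⟨hxH, isPiPrimeElement_coe_iff.2 hx⟩
  have : (v : G) * x * v⁻¹ ∈ H := map_subtype_le _ (hH.conj_mem _ hxR v)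
  simpa [mem_subgroupOf] using this

lemma piResidual_le_normalizer_subgroupOf (hH : piResidual π G ≤ normalizer (H : Set G))
    (V : Subgroup G) : piResidual π V ≤ normalizer (H.subgroupOf V : Set V) :=
  calc piResidual π V ≤ (piResidual π G).comap V.subtype := piResidual_le_comap_s8 V.subtype
    _ ≤ (normalizer (H : Set G)).comap V.subtype := comap_mono hH
    _ ≤ normalizer (H.subgroupOf V : Set V) := le_normalizer_comap V.subtype

end Dnormal

theorem dnormal_inf_general (π : Set ℕ)
    (G : Type*) [Group G] [Finite G] (H V : Subgroup G)
    (h : IsDnormal π H) :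
    IsDnormal π ((H ⊓ V).subgroupOf V) := by
  rw [inf_subgroupOf_right]
  rcases h with ⟨hπ, hH⟩ | ⟨hπ, hres, hnorm⟩
  · exact Or.inl ⟨hπ, hH.subgroupOf V⟩
  · exact Or.inr ⟨hπ, normal_piResidualIn_subgroupOf hres V,
      piResidual_le_normalizer_subgroupOf hnorm V⟩

/-- Lemma 1.5(3): if `H` is `N^π`-Dnormal in `G` and `V ≤ G`, then `H ∩ V` is
`N^π`-Dnormal in `V`. -/
theorem dnormal_inf (π : Set ℕ) (hπ : ∀ p ∈ π, p.Prime)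
    (G : Type*) [Group G] [Finite G] (H V : Subgroup G)
    (h : IsDnormal π H) :
    IsDnormal π ((H ⊓ V).subgroupOf V) :=
  dnormal_inf_general π G H V h
end
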